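/- arXiv:2008.08191 — 4 statements merged into one kernel-verified Lean document; each statement's English description precedes it below -/
import Mathlib

section
/- Let n ≥ 1 and let E, G : ℝⁿ × ℝⁿ → ℝ^{n×n} and A : ℝⁿ × ℝⁿ → ℝ^{n×n} be matrix-valued functions with E(q,p) and G(q,p) skew-symmetric for every (q,p). Let H : ℝⁿ × ℝⁿ → ℝ be differentiable with H(q, p) = H(q, −p) for all q, p. Suppose q, p : ℝ → ℝⁿ are differentiable and satisfy the state-dependent non-canonical Hamilton equations (q'(t), p'(t))ᵀ = [[E(q(t),p(t)), A(q(t),p(t))], [−A(q(t),p(t))ᵀ, G(q(t),p(t))]] · (∇_q H(q(t),p(t)), ∇_p H(q(t),p(t)))ᵀ for all t. Fix τ ∈ ℝ and define q̃(t) = q(τ − t), p̃(t) = −p(τ − t). Then for all t, (q̃'(t), p̃'(t))ᵀ = [[−E(q̃(t),−p̃(t)), A(q̃(t),−p̃(t))], [−A(q̃(t),−p̃(t))ᵀ, −G(q̃(t),−p̃(t))]] · (∇_q H(q̃(t),p̃(t)), ∇_p H(q̃(t),p̃(t)))ᵀ. -/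
/-!
Reversing time negates `q̇` and, because `p̃ = -p ∘ (τ - ·)`, leaves `ṗ` unchanged. Since `H` is
even in `p`, the substitution `p ↦ -p` leaves `∇_q H` unchanged and flips the sign of `∇_p H`.
Negating the diagonal blocks `E` and `G` is exactly what absorbs these sign changes.
-/

open Matrix

/-- Coordinate gradient of a function on `ι → ℝ`. -/
noncomputable def grad {ι : Type*} [Fintype ι] [DecidableEq ι]
    (f : (ι → ℝ) → ℝ) (x : ι → ℝ) : ι → ℝ :=
  fun i => fderiv ℝ f x (Pi.single i 1)

theorem fderiv_neg_of_even {𝕜 E F : Type*} [NontriviallyNormedField 𝕜]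
    [NormedAddCommGroup E] [NormedSpace 𝕜 E] [NormedAddCommGroup F] [NormedSpace 𝕜 F]
    {f : E → F} (hf : ∀ x, f (-x) = f x) (x : E) :
    fderiv 𝕜 f (-x) = -fderiv 𝕜 f x := by
  have hcomp : f ∘ ContinuousLinearEquiv.neg 𝕜 = f := funext hf
  ext v
  conv_rhs => rw [← hcomp, ContinuousLinearEquiv.comp_right_fderiv]
  simp

theorem grad_neg_of_even {ι : Type*} [Fintype ι] [DecidableEq ι] {f : (ι → ℝ) → ℝ}
    (hf : ∀ x, f (-x) = f x) (x : ι → ℝ) :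
    grad f (-x) = -grad f x := by
  ext i
  simp [grad, fderiv_neg_of_even hf]

section BlockMulVec

variable {m n R : Type*} [Fintype m] [Fintype n] [Ring R]

theorem fromBlocks_mulVec_sumElim (E : Matrix m m R) (B : Matrix m n R) (C : Matrix n m R)
    (G : Matrix n n R) (u : m → R) (v : n → R) :
    fromBlocks E B C G *ᵥ Sum.elim u v = Sum.elim (E *ᵥ u + B *ᵥ v) (C *ᵥ u + G *ᵥ v) := by
  rw [fromBlocks_mulVec, Sum.elim_comp_inl, Sum.elim_comp_inr]

theorem fromBlocks_neg_diag_mulVec_sumElim_neg (E : Matrix m m R) (B : Matrix m n R)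
    (C : Matrix n m R) (G : Matrix n n R) (u : m → R) (v : n → R) :
    fromBlocks (-E) B C (-G) *ᵥ Sum.elim u (-v) =
      Sum.elim (-(E *ᵥ u + B *ᵥ v)) (C *ᵥ u + G *ᵥ v) := by
  simp only [fromBlocks_mulVec_sumElim, neg_mulVec, mulVec_neg, neg_add, neg_neg]

end BlockMulVec

theorem stmt1_general (n : ℕ)
    (E G A : (Fin n → ℝ) → (Fin n → ℝ) → Matrix (Fin n) (Fin n) ℝ)
    (H : (Fin n → ℝ) → (Fin n → ℝ) → ℝ)
    (hHsym : ∀ q p, H q (-p) = H q p)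
    (q p : ℝ → (Fin n → ℝ))
    (hdyn : ∀ t : ℝ,
      Sum.elim (deriv q t) (deriv p t) =
        (fromBlocks (E (q t) (p t)) (A (q t) (p t))
                    (-(A (q t) (p t))ᵀ) (G (q t) (p t))) *ᵥ
          Sum.elim (grad (fun q' => H q' (p t)) (q t))
                   (grad (fun p' => H (q t) p') (p t)))
    (τ : ℝ) (qr pr : ℝ → (Fin n → ℝ))
    (hqr : qr = fun t => q (τ - t)) (hpr : pr = fun t => -p (τ - t)) :
    ∀ t : ℝ,
      Sum.elim (deriv qr t) (deriv pr t) =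
        (fromBlocks (-(E (qr t) (-pr t))) (A (qr t) (-pr t))
                    (-(A (qr t) (-pr t))ᵀ) (-(G (qr t) (-pr t)))) *ᵥ
          Sum.elim (grad (fun q' => H q' (pr t)) (qr t))
                   (grad (fun p' => H (qr t) p') (pr t)) := by
  intro t
  subst hqr hpr
  obtain ⟨hq, hp⟩ := Sum.elim_eq_iff.mp ((hdyn (τ - t)).trans (fromBlocks_mulVec_sumElim ..))
  have hderiv_q : deriv (fun t => q (τ - t)) t = -deriv q (τ - t) := deriv_comp_const_sub ..
  have hderiv_p : deriv (fun t => -p (τ - t)) t = deriv p (τ - t) := by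
    rw [deriv.fun_neg, deriv_comp_const_sub, neg_neg]
  have hgrad_q : grad (fun q' => H q' (-p (τ - t))) (q (τ - t)) =
      grad (fun q' => H q' (p (τ - t))) (q (τ - t)) := by
    simp only [hHsym]
  have hgrad_p : grad (fun p' => H (q (τ - t)) p') (-p (τ - t)) =
      -grad (fun p' => H (q (τ - t)) p') (p (τ - t)) :=
    grad_neg_of_even (hHsym _) _
  rw [hderiv_q, hderiv_p, hgrad_q, hgrad_p, neg_neg, fromBlocks_neg_diag_mulVec_sumElim_neg, hq, hp]

/-- Time reversal of non-canonical Hamiltonian dynamics with a state-dependent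
Poisson matrix `[[E(q,p), A(q,p)], [−A(q,p)ᵀ, G(q,p)]]`: the reversed trajectory
`(q(τ−t), −p(τ−t))` obeys the dynamics with the state-dependent time-reversal
Poisson matrix `[[−E(q,−p), A(q,−p)], [−A(q,−p)ᵀ, −G(q,−p)]]`. -/
theorem stmt1 (n : ℕ) (hn : 1 ≤ n)
    (E G A : (Fin n → ℝ) → (Fin n → ℝ) → Matrix (Fin n) (Fin n) ℝ)
    (hE : ∀ q p, (E q p)ᵀ = -(E q p)) (hG : ∀ q p, (G q p)ᵀ = -(G q p))
    (H : (Fin n → ℝ) → (Fin n → ℝ) → ℝ)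
    (hH : Differentiable ℝ (fun z : (Fin n → ℝ) × (Fin n → ℝ) => H z.1 z.2))
    (hHsym : ∀ q p, H q (-p) = H q p)
    (q p : ℝ → (Fin n → ℝ))
    (hq : Differentiable ℝ q) (hp : Differentiable ℝ p)
    (hdyn : ∀ t : ℝ,
      Sum.elim (deriv q t) (deriv p t) =
        (fromBlocks (E (q t) (p t)) (A (q t) (p t))
                    (-(A (q t) (p t))ᵀ) (G (q t) (p t))) *ᵥ
          Sum.elim (grad (fun q' => H q' (p t)) (q t))
                   (grad (fun p' => H (q t) p') (p t)))
    (τ : ℝ) (qr pr : ℝ → (Fin n → ℝ))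
    (hqr : qr = fun t => q (τ - t)) (hpr : pr = fun t => -p (τ - t)) :
    ∀ t : ℝ,
      Sum.elim (deriv qr t) (deriv pr t) =
        (fromBlocks (-(E (qr t) (-pr t))) (A (qr t) (-pr t))
                    (-(A (qr t) (-pr t))ᵀ) (-(G (qr t) (-pr t)))) *ᵥ
          Sum.elim (grad (fun q' => H q' (pr t)) (qr t))
                   (grad (fun p' => H (qr t) p') (pr t)) :=
  stmt1_general n E G A H hHsym q p hdyn τ qr pr hqr hpr
end

section
/- (Reversibility of the implicit midpoint integrator for non-canonical structure.) Let n ≥ 1, ε ∈ ℝ, let E, G ∈ ℝ^{n×n} be skew-symmetric, let A ∈ ℝ^{n×n}, and let g : ℝⁿ → ℝⁿ be any function (playing the role of ∇U for a separable Hamiltonian H(q,p) = U(q) + ½ pᵀp). Suppose q₀, p₀, q₁, p₁ ∈ ℝⁿ satisfy the implicit midpoint update for the Poisson matrix [[E, A], [−Aᵀ, G]]: q₁ = q₀ + ε·(E g((q₀+q₁)/2) + A (p₀+p₁)/2) and p₁ = p₀ + ε·(−Aᵀ g((q₀+q₁)/2) + G (p₀+p₁)/2). Then q₂ = q₀ and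 p₂ = −p₀ satisfy the implicit midpoint update with the same step-size ε for the time-reversal Poisson matrix [[−E, A], [−Aᵀ, −G]] started from (q₁, −p₁): q₂ = q₁ + ε·(−E g((q₁+q₂)/2) + A (−p₁+p₂)/2) and p₂ = −p₁ + ε·(−Aᵀ g((q₁+q₂)/2) − G (−p₁+p₂)/2). -/
open Matrix

/-- Reversibility of the implicit midpoint integrator for non-canonical
structure: if `(q₁, p₁)` is the implicit midpoint update of `(q₀, p₀)` for the
Poisson matrix `[[E, A], [−Aᵀ, G]]` with step-size `ε` (for the separable
Hamiltonian `U(q) + ½pᵀp`, with `g = ∇U`), then `(q₂, p₂) = (q₀, −p₀)` solves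
the implicit midpoint update started from `(q₁, −p₁)` with the same step-size
for the time-reversal Poisson matrix `[[−E, A], [−Aᵀ, −G]]`. -/
theorem stmt5 (n : ℕ) (hn : 1 ≤ n) (ε : ℝ)
    (E G A : Matrix (Fin n) (Fin n) ℝ)
    (hE : Eᵀ = -E) (hG : Gᵀ = -G)
    (g : (Fin n → ℝ) → (Fin n → ℝ))
    (q₀ p₀ q₁ p₁ : Fin n → ℝ)
    (hq₁ : q₁ = q₀ + ε • (E *ᵥ g ((q₀ + q₁) / 2) + A *ᵥ ((p₀ + p₁) / 2)))
    (hp₁ : p₁ = p₀ + ε • ((-Aᵀ) *ᵥ g ((q₀ + q₁) / 2) + G *ᵥ ((p₀ + p₁) / 2))) :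
    q₀ = q₁ + ε • ((-E) *ᵥ g ((q₁ + q₀) / 2) + A *ᵥ ((-p₁ + -p₀) / 2)) ∧
    -p₀ = -p₁ + ε • ((-Aᵀ) *ᵥ g ((q₁ + q₀) / 2) + (-G) *ᵥ ((-p₁ + -p₀) / 2)) := by
  have h1 : q₁ + q₀ = q₀ + q₁ := add_comm _ _
  have h2 : (-p₁ + -p₀) / 2 = -((p₀ + p₁) / 2) := by
    rw [← neg_add, neg_div, add_comm]
  rw [h1, h2] at *
  set a := g ((q₀ + q₁) / 2) with ha
  set P := (p₀ + p₁) / 2 with hP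
  constructor
  · rw [Matrix.neg_mulVec, Matrix.mulVec_neg, hq₁]
    module
  · rw [Matrix.neg_mulVec] at hp₁
    rw [Matrix.neg_mulVec, Matrix.neg_mulVec, Matrix.mulVec_neg, hp₁]
    module
end

section
/- (Symplectic basis for magnetic position preconditioning.) Let n ≥ 1, let M ∈ ℝ^{n×n} be symmetric positive definite with symmetric positive-definite square root L (L = Lᵀ, L·L = M), and let G ∈ ℝ^{n×n} be skew-symmetric. Define Q = (L⁻¹)ᵀ G L⁻¹ / 2 and the 2n×2n block matrix B = [[L, 0], [0, L]] · [[I, 0], [Q, I]], where I is the n×n identity. Then B J_can Bᵀ = [[0, M], [−M, G]]; equivalently, B is a basis in which the symplectic matrix J = −[[0, M], [−M, G]]⁻¹ assumes the canonical form, i.e., Bᵀ J B = J_can. -/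
open Matrix

/-- Symplectic basis for magnetic position preconditioning: with `L` the
symmetric positive-definite square root of `M`, `G` skew-symmetric,
`Q = (L⁻¹)ᵀ G L⁻¹ / 2` and `B = [[L, 0], [0, L]] · [[I, 0], [Q, I]]`, one has
`B J_can Bᵀ = [[0, M], [−M, G]]` and `Bᵀ J B = J_can` where
`J = −[[0, M], [−M, G]]⁻¹`. -/
theorem stmt13 (n : ℕ) (hn : 1 ≤ n)
    (M L G Q : Matrix (Fin n) (Fin n) ℝ)
    (hM : M.PosDef) (hLsymm : Lᵀ = L) (hLpd : L.PosDef) (hLL : L * L = M)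
    (hG : Gᵀ = -G) (hQ : Q = (2⁻¹ : ℝ) • ((L⁻¹)ᵀ * G * L⁻¹))
    (B : Matrix (Fin n ⊕ Fin n) (Fin n ⊕ Fin n) ℝ)
    (hB : B = fromBlocks L 0 0 L * fromBlocks 1 0 Q 1) :
    B * fromBlocks 0 1 (-1) 0 * Bᵀ = fromBlocks 0 M (-M) G ∧
    Bᵀ * (-(fromBlocks 0 M (-M) G)⁻¹) * B = fromBlocks 0 1 (-1) 0 := by
  have hLdet : IsUnit L.det := isUnit_iff_ne_zero.mpr (ne_of_gt hLpd.det_pos)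
  have hLinv : (L⁻¹)ᵀ = L⁻¹ := by
    rw [transpose_nonsing_inv, hLsymm]
  have hLmul : L * L⁻¹ = 1 := mul_nonsing_inv L hLdet
  have hLmul' : L⁻¹ * L = 1 := nonsing_inv_mul L hLdet
  have hQT : Qᵀ = -Q := by
    rw [hQ]
    simp [transpose_smul, transpose_mul, hG, hLinv, Matrix.mul_assoc, Matrix.neg_mul,
      Matrix.mul_neg]
  have hB' : B = fromBlocks L 0 (L * Q) L := by
    rw [hB, fromBlocks_multiply]
    simp
  have hLQL : L * (Q * L) = (2⁻¹ : ℝ) • G := by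
    rw [hQ, hLinv, Matrix.smul_mul, Matrix.mul_smul]
    congr 1
    calc L * (L⁻¹ * G * L⁻¹ * L) = (L * L⁻¹) * G * (L⁻¹ * L) := by
          simp only [Matrix.mul_assoc]
      _ = G := by rw [hLmul, hLmul']; simp
  have e1 : B * fromBlocks 0 1 (-1) 0 = fromBlocks 0 L (-L) (L * Q) := by
    rw [hB', fromBlocks_multiply]
    simp
  have e2 : Bᵀ = fromBlocks L (-(Q * L)) 0 L := by
    rw [hB', fromBlocks_transpose, transpose_mul, hLsymm, hQT]
    simp [Matrix.neg_mul]
  have key : B * fromBlocks 0 1 (-1) 0 * Bᵀ = fromBlocks 0 M (-M) G := by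
    rw [e1, e2, fromBlocks_multiply]
    have h4 : -L * -(Q * L) + L * Q * L = G := by
      rw [Matrix.neg_mul, Matrix.mul_neg, neg_neg, Matrix.mul_assoc, hLQL, ← add_smul]
      norm_num
    rw [h4]
    simp [hLL]
  refine ⟨key, ?_⟩
  have hBdet : IsUnit B.det := by
    rw [hB', det_fromBlocks_zero₁₂]
    exact hLdet.mul hLdet
  have hBTdet : IsUnit Bᵀ.det := by rwa [det_transpose]
  have hJc : (fromBlocks 0 1 (-1) 0 : Matrix (Fin n ⊕ Fin n) (Fin n ⊕ Fin n) ℝ)⁻¹ =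
      fromBlocks 0 (-1) 1 0 := by
    apply inv_eq_right_inv
    rw [fromBlocks_multiply, ← fromBlocks_one]
    congr 1 <;> simp
  rw [← key, Matrix.mul_inv_rev, Matrix.mul_inv_rev, hJc]
  calc Bᵀ * -(Bᵀ⁻¹ * (fromBlocks 0 (-1) 1 0 * B⁻¹)) * B
      = -((Bᵀ * Bᵀ⁻¹) * fromBlocks 0 (-1) 1 0 * (B⁻¹ * B)) := by
        simp only [Matrix.mul_neg, Matrix.neg_mul, Matrix.mul_assoc]
    _ = -(fromBlocks 0 (-1) 1 0) := by
        rw [mul_nonsing_inv Bᵀ hBTdet, nonsing_inv_mul B hBdet]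
        simp
    _ = fromBlocks 0 1 (-1) 0 := by
        ext i j
        cases i <;> cases j <;> simp [fromBlocks]
end

section
/- (The rotation map Φ₃ is the exact flow of the binding Hamiltonian.) Let n ≥ 1, ω ∈ ℝ, and let q₀, p₀, x₀, y₀ ∈ ℝⁿ. Define curves q, p, x, y : ℝ → ℝⁿ by q(t) = ½[(q₀+x₀) + cos(2tω)(q₀−x₀) + sin(2tω)(p₀−y₀)], p(t) = ½[(p₀+y₀) − sin(2tω)(q₀−x₀) + cos(2tω)(p₀−y₀)], x(t) = ½[(q₀+x₀) − cos(2tω)(q₀−x₀) − sin(2tω)(p₀−y₀)], y(t) = ½[(p₀+y₀) + sin(2tω)(q₀−x₀) − cos(2tω)(p₀−y₀)]. Then (q(0), p(0), x(0), y(0)) = (q₀, p₀, x₀, y₀) and for all t: q'(t) = ω(p(t) − y(t)), p'(t) = −ω(q(t) − x(t)), x'(t) = ω(y(t) − p(t)), and y'(t) = −ω(x(t) − q(t)). -/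
/-!
In the coordinates `q ± x`, `p ± y` the binding Hamiltonian decouples: the sums `q + x`,
`p + y` are conserved, while the differences `(q − x, p − y)` rotate with angular velocity
`2ω`. So each of the four curves is half of a constant plus or minus a component of the
rotating curve `t ↦ R(2tω)(q₀ − x₀, p₀ − y₀)`, and the equations of motion reduce to the
derivative of that rotation.
-/

open Real

section RotatingCurve

variable {E : Type*} [NormedAddCommGroup E] [NormedSpace ℝ E]

/-- `rotatingCurve ω u v t` is the first component of `R(2tω)(u, v)`; the second one is
`rotatingCurve ω v (-u) t`. -/
noncomputable def rotatingCurve (ω : ℝ) (u v : E) (t : ℝ) : E :=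
  cos (2 * t * ω) • u + sin (2 * t * ω) • v

variable (ω : ℝ) (u v : E) (t : ℝ)

@[simp]
theorem rotatingCurve_zero : rotatingCurve ω u v 0 = u := by
  simp [rotatingCurve]

theorem rotatingCurve_neg : rotatingCurve ω (-u) (-v) t = -rotatingCurve ω u v t := by
  simp only [rotatingCurve, smul_neg, neg_add]

theorem hasDerivAt_rotatingCurve :
    HasDerivAt (rotatingCurve ω u v) ((2 * ω) • rotatingCurve ω v (-u) t) t := by
  have hangle : HasDerivAt (fun t : ℝ => 2 * t * ω) (2 * ω) t := by
    simpa using ((hasDerivAt_id t).const_mul 2).mul_const ω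
  refine (((hasDerivAt_cos _).comp t hangle).smul_const u |>.add
    (((hasDerivAt_sin _).comp t hangle).smul_const v)).congr_deriv ?_
  simp only [rotatingCurve]
  module

end RotatingCurve

theorem stmt15_general (n : ℕ) (ω : ℝ)
    (q₀ p₀ x₀ y₀ : Fin n → ℝ)
    (q p x y : ℝ → (Fin n → ℝ))
    (hq : q = fun t => (2⁻¹ : ℝ) •
      ((q₀ + x₀) + Real.cos (2 * t * ω) • (q₀ - x₀) + Real.sin (2 * t * ω) • (p₀ - y₀)))
    (hp : p = fun t => (2⁻¹ : ℝ) •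
      ((p₀ + y₀) - Real.sin (2 * t * ω) • (q₀ - x₀) + Real.cos (2 * t * ω) • (p₀ - y₀)))
    (hx : x = fun t => (2⁻¹ : ℝ) •
      ((q₀ + x₀) - Real.cos (2 * t * ω) • (q₀ - x₀) - Real.sin (2 * t * ω) • (p₀ - y₀)))
    (hy : y = fun t => (2⁻¹ : ℝ) •
      ((p₀ + y₀) + Real.sin (2 * t * ω) • (q₀ - x₀) - Real.cos (2 * t * ω) • (p₀ - y₀))) :
    (q 0 = q₀ ∧ p 0 = p₀ ∧ x 0 = x₀ ∧ y 0 = y₀) ∧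
    ∀ t : ℝ,
      deriv q t = ω • (p t - y t) ∧
      deriv p t = -(ω • (q t - x t)) ∧
      deriv x t = ω • (y t - p t) ∧
      deriv y t = -(ω • (x t - q t)) := by
  set R := rotatingCurve ω (q₀ - x₀) (p₀ - y₀)
  set S := rotatingCurve ω (p₀ - y₀) (-(q₀ - x₀))
  replace hq : q = fun t => (2⁻¹ : ℝ) • ((q₀ + x₀) + R t) := by
    subst hq; funext t; simp only [R, rotatingCurve]; module
  replace hp : p = fun t => (2⁻¹ : ℝ) • ((p₀ + y₀) + S t) := by
    subst hp; funext t; simp only [S, rotatingCurve]; module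
  replace hx : x = fun t => (2⁻¹ : ℝ) • ((q₀ + x₀) - R t) := by
    subst hx; funext t; simp only [R, rotatingCurve]; module
  replace hy : y = fun t => (2⁻¹ : ℝ) • ((p₀ + y₀) - S t) := by
    subst hy; funext t; simp only [S, rotatingCurve]; module
  subst hq hp hx hy
  constructor
  · simp only [R, S, rotatingCurve_zero]
    refine ⟨?_, ?_, ?_, ?_⟩ <;> module
  intro t
  have hR : HasDerivAt R ((2 * ω) • S t) t := hasDerivAt_rotatingCurve ..
  have hS : HasDerivAt S (-((2 * ω) • R t)) t := by
    simpa only [rotatingCurve_neg, smul_neg] using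
      hasDerivAt_rotatingCurve ω (p₀ - y₀) (-(q₀ - x₀)) t
  beta_reduce
  rw [((hR.const_add _).fun_const_smul (2⁻¹ : ℝ)).deriv,
    ((hS.const_add _).fun_const_smul (2⁻¹ : ℝ)).deriv,
    ((hR.const_sub _).fun_const_smul (2⁻¹ : ℝ)).deriv,
    ((hS.const_sub _).fun_const_smul (2⁻¹ : ℝ)).deriv]
  refine ⟨?_, ?_, ?_, ?_⟩ <;> module

/-- The rotation map `Φ₃` of the explicit integrator is the exact flow of the
binding Hamiltonian `H_b(q,p,x,y) = (ω/2)(‖q−x‖² + ‖p−y‖²)`: the explicitly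
given rotating curves start at `(q₀, p₀, x₀, y₀)` and satisfy
`q' = ω(p−y)`, `p' = −ω(q−x)`, `x' = ω(y−p)`, `y' = −ω(x−q)`. -/
theorem stmt15 (n : ℕ) (hn : 1 ≤ n) (ω : ℝ)
    (q₀ p₀ x₀ y₀ : Fin n → ℝ)
    (q p x y : ℝ → (Fin n → ℝ))
    (hq : q = fun t => (2⁻¹ : ℝ) •
      ((q₀ + x₀) + Real.cos (2 * t * ω) • (q₀ - x₀) + Real.sin (2 * t * ω) • (p₀ - y₀)))
    (hp : p = fun t => (2⁻¹ : ℝ) •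
      ((p₀ + y₀) - Real.sin (2 * t * ω) • (q₀ - x₀) + Real.cos (2 * t * ω) • (p₀ - y₀)))
    (hx : x = fun t => (2⁻¹ : ℝ) •
      ((q₀ + x₀) - Real.cos (2 * t * ω) • (q₀ - x₀) - Real.sin (2 * t * ω) • (p₀ - y₀)))
    (hy : y = fun t => (2⁻¹ : ℝ) •
      ((p₀ + y₀) + Real.sin (2 * t * ω) • (q₀ - x₀) - Real.cos (2 * t * ω) • (p₀ - y₀))) :
    (q 0 = q₀ ∧ p 0 = p₀ ∧ x 0 = x₀ ∧ y 0 = y₀) ∧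
    ∀ t : ℝ,
      deriv q t = ω • (p t - y t) ∧
      deriv p t = -(ω • (q t - x t)) ∧
      deriv x t = ω • (y t - p t) ∧
      deriv y t = -(ω • (x t - q t)) :=
  stmt15_general n ω q₀ p₀ x₀ y₀ q p x y hq hp hx hy
end
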